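/- arXiv:2005.14681 — 3 statements merged into one kernel-verified Lean document; each statement's English description precedes it below -/
import Mathlib

section
/- Let p be a prime with p ≡ 3 (mod 4) and let D be a positive integer. If a, b, c, d are integers, not all zero, satisfying p·a² + p·b² + c² = D·d², then D is a square modulo p (i.e., the image of D in ℤ/pℤ is a square). -/
/-- Let `p` be a prime with `p ≡ 3 (mod 4)` and let `D` be a positive integer.
If `a, b, c, d` are integers, not all zero, with `p·a² + p·b² + c² = D·d²`,
then `D` is a square modulo `p`. -/
theorem square_mod_p_of_quadratic_form_zero
    (p : ℕ) (hp : p.Prime) (hp4 : p % 4 = 3) (D : ℕ) (hD : 0 < D)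
    (a b c d : ℤ) (hne : ¬(a = 0 ∧ b = 0 ∧ c = 0 ∧ d = 0))
    (h : (p : ℤ) * a ^ 2 + (p : ℤ) * b ^ 2 + c ^ 2 = (D : ℤ) * d ^ 2) :
    IsSquare ((D : ZMod p)) := by
  haveI : Fact p.Prime := ⟨hp⟩
  have hpZ : Prime (p : ℤ) := Int.prime_iff_natAbs_prime.mpr (by simpa using hp)
  have hp0 : (p : ℤ) ≠ 0 := by exact_mod_cast hp.ne_zero
  have hp2 : 2 ≤ p := hp.two_le
  have key : ∀ n : ℕ, ∀ a b c d : ℤ,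
      a.natAbs + b.natAbs + c.natAbs + d.natAbs = n →
      ¬(a = 0 ∧ b = 0 ∧ c = 0 ∧ d = 0) →
      (p : ℤ) * a ^ 2 + (p : ℤ) * b ^ 2 + c ^ 2 = (D : ℤ) * d ^ 2 →
      IsSquare ((D : ZMod p)) := by
    intro n
    induction n using Nat.strong_induction_on with
    | _ n ih =>
      intro a b c d hn hne h
      by_cases hd : (p : ℤ) ∣ d
      · -- descent case
        obtain ⟨e, rfl⟩ := hd
        have hc2 : (p : ℤ) ∣ c ^ 2 :=
          ⟨(D : ℤ) * p * e ^ 2 - a ^ 2 - b ^ 2, by linear_combination h⟩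
        obtain ⟨f, rfl⟩ := hpZ.dvd_of_dvd_pow hc2
        have E1 : a ^ 2 + b ^ 2 + (p : ℤ) * f ^ 2 = (D : ℤ) * p * e ^ 2 := by
          apply mul_left_cancel₀ hp0
          linear_combination h
        -- a² + b² ≡ 0 mod p forces p ∣ a and p ∣ b
        have hzm : (a : ZMod p) ^ 2 + (b : ZMod p) ^ 2 = 0 := by
          have := congrArg (Int.cast : ℤ → ZMod p) E1
          push_cast at this
          simpa [ZMod.natCast_self] using this
        have hb0 : (b : ZMod p) = 0 := by
          by_contra hb
          have hsq : IsSquare (-1 : ZMod p) := by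
            refine ⟨(a : ZMod p) * (b : ZMod p)⁻¹, ?_⟩
            field_simp
            linear_combination -hzm
          rw [ZMod.exists_sq_eq_neg_one_iff] at hsq
          exact hsq hp4
        have ha0 : (a : ZMod p) = 0 := by
          have : (a : ZMod p) ^ 2 = 0 := by rwa [hb0, zero_pow two_ne_zero, add_zero] at hzm
          exact pow_eq_zero_iff two_ne_zero |>.mp this
        obtain ⟨g, rfl⟩ : (p : ℤ) ∣ a := by
          exact (ZMod.intCast_zmod_eq_zero_iff_dvd a p).mp ha0
        obtain ⟨k, rfl⟩ : (p : ℤ) ∣ b := by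
          exact (ZMod.intCast_zmod_eq_zero_iff_dvd b p).mp hb0
        have E2 : (p : ℤ) * g ^ 2 + (p : ℤ) * k ^ 2 + f ^ 2 = (D : ℤ) * e ^ 2 := by
          apply mul_left_cancel₀ hp0
          linear_combination E1
        have hne2 : ¬(g = 0 ∧ k = 0 ∧ f = 0 ∧ e = 0) := by
          rintro ⟨rfl, rfl, rfl, rfl⟩
          exact hne ⟨mul_zero _, mul_zero _, mul_zero _, mul_zero _⟩
        set m := g.natAbs + k.natAbs + f.natAbs + e.natAbs with hm
        have hmpos : 0 < m := by
          rcases not_and_or.mp hne2 with hg | h'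
          · have := Int.natAbs_pos.mpr hg; omega
          rcases not_and_or.mp h' with hk | h''
          · have := Int.natAbs_pos.mpr hk; omega
          rcases not_and_or.mp h'' with hf | he
          · have := Int.natAbs_pos.mpr hf; omega
          · have := Int.natAbs_pos.mpr he; omega
        have hnm : n = p * m := by
          subst hn
          simp only [hm, Int.natAbs_mul, Int.natAbs_natCast]
          ring
        have hlt : m < n := by
          rw [hnm]
          calc m = 1 * m := (one_mul m).symm
          _ < p * m := (Nat.mul_lt_mul_right hmpos).mpr (by omega)
        exact ih m hlt g k f e rfl hne2 E2
      · -- direct case: p ∤ d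
        have hdz : (d : ZMod p) ≠ 0 := fun hz =>
          hd ((ZMod.intCast_zmod_eq_zero_iff_dvd d p).mp hz)
        have hzm : (c : ZMod p) ^ 2 = (D : ZMod p) * (d : ZMod p) ^ 2 := by
          have := congrArg (Int.cast : ℤ → ZMod p) h
          push_cast at this
          simpa [ZMod.natCast_self] using this
        refine ⟨(c : ZMod p) * (d : ZMod p)⁻¹, ?_⟩
        field_simp
        linear_combination -hzm
  exact key _ a b c d rfl hne h
end

section
/- Let p be a prime with p ≡ 3 (mod 4) and let D be an integer whose image in ℤ/pℤ is not a square. Then the equation p·x₁² + p·x₂² + x₃² = D·x₄² has no nontrivial solution in the field ℚ_p of p-adic numbers: if x₁, x₂, x₃, x₄ ∈ ℚ_p satisfy p·x₁² + p·x₂² + x₃² = D·x₄², then x₁ = x₂ = x₃ = x₄ = 0. -/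
/-!
For `u ∈ ℤ_p` whose residue is not a square mod `p`, the form `x² - u y²` has no nontrivial zero
mod `p`, and scaling `(x, y)` to a primitive pair gives `‖x² - u y²‖ = max ‖x‖ ‖y‖ ^ 2` on `ℚ_p`.
Both `x₁² + x₂² = x₁² - (-1) x₂²` (as `p ≡ 3 mod 4`) and `x₃² - D x₄²` are of this form, so the
equation forces `p⁻¹ m² = n²` for two norms `m, n`. Nonzero norms are integral powers of `p`, so
comparing the parity of exponents gives `m = n = 0`.
-/

theorem exists_norm_eq_max {E : Type*} [Norm E] (x y : E) : ∃ w : E, ‖w‖ = max ‖x‖ ‖y‖ :=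
  (max_choice ‖x‖ ‖y‖).elim (fun h => ⟨x, h.symm⟩) (fun h => ⟨y, h.symm⟩)

theorem max_norm_eq_zero_iff {E : Type*} [NormedAddGroup E] {x y : E} :
    max ‖x‖ ‖y‖ = 0 ↔ x = 0 ∧ y = 0 := by
  refine ⟨fun h => ⟨?_, ?_⟩, fun ⟨hx, hy⟩ => by simp [hx, hy]⟩
  · exact norm_le_zero_iff.mp (h ▸ le_max_left _ _)
  · exact norm_le_zero_iff.mp (h ▸ le_max_right _ _)

theorem eq_zero_and_eq_zero_of_sq_sub_mul_sq_eq_zero {F : Type*} [Field F] {u : F}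
    (hu : ¬IsSquare u) {s t : F} (h : s ^ 2 - u * t ^ 2 = 0) : s = 0 ∧ t = 0 := by
  have ht : t = 0 := by
    by_contra ht
    exact hu ⟨s / t, by field_simp; linear_combination -h⟩
  subst ht
  exact ⟨pow_eq_zero_iff two_ne_zero |>.mp (by simpa using h), rfl⟩

namespace PadicInt

variable {p : ℕ} [Fact p.Prime]

theorem toZMod_eq_zero_iff_norm_lt_one {x : ℤ_[p]} : toZMod x = 0 ↔ ‖x‖ < 1 := by
  rw [← RingHom.mem_ker, ker_toZMod, IsLocalRing.mem_maximalIdeal, mem_nonunits]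

theorem norm_lt_one_of_norm_sq_sub_mul_sq_lt_one {u : ℤ_[p]} (hu : ¬IsSquare (toZMod u))
    {s t : ℤ_[p]} (h : ‖s ^ 2 - u * t ^ 2‖ < 1) : ‖s‖ < 1 ∧ ‖t‖ < 1 := by
  simp only [← toZMod_eq_zero_iff_norm_lt_one, map_sub, map_mul, map_pow] at h ⊢
  exact eq_zero_and_eq_zero_of_sq_sub_mul_sq_eq_zero hu h

end PadicInt

namespace Padic

variable {p : ℕ} [Fact p.Prime]

theorem norm_sq_sub_mul_sq {u : ℤ_[p]} (hu : ¬IsSquare (PadicInt.toZMod u)) (x y : ℚ_[p]) :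
    ‖x ^ 2 - u * y ^ 2‖ = max ‖x‖ ‖y‖ ^ 2 := by
  obtain ⟨w, hw⟩ := exists_norm_eq_max x y
  rcases eq_or_ne w 0 with rfl | hw0
  · obtain ⟨rfl, rfl⟩ := max_norm_eq_zero_iff.mp (hw.symm.trans norm_zero)
    simp
  have hwpos : 0 < ‖w‖ := norm_pos_iff.mpr hw0
  set s : ℤ_[p] := ⟨x / w, by rw [norm_div, div_le_one hwpos, hw]; exact le_max_left _ _⟩
  set t : ℤ_[p] := ⟨y / w, by rw [norm_div, div_le_one hwpos, hw]; exact le_max_right _ _⟩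
  have hs : (s : ℚ_[p]) = x / w := rfl
  have ht : (t : ℚ_[p]) = y / w := rfl
  have hst : max ‖s‖ ‖t‖ = 1 := by
    rw [PadicInt.norm_def, PadicInt.norm_def, hs, ht, norm_div, norm_div,
      max_div_div_right hwpos.le, ← hw, div_self hwpos.ne']
  have hunit : ‖s ^ 2 - u * t ^ 2‖ = 1 := by
    refine le_antisymm (PadicInt.norm_le_one _) (not_lt.mp fun h => ?_)
    obtain ⟨hs_lt, ht_lt⟩ := PadicInt.norm_lt_one_of_norm_sq_sub_mul_sq_lt_one hu h
    exact (max_lt hs_lt ht_lt).ne hst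
  have hscale : x ^ 2 - u * y ^ 2 = w ^ 2 * ((s ^ 2 - u * t ^ 2 : ℤ_[p]) : ℚ_[p]) := by
    push_cast
    rw [hs, ht]
    field_simp
  rw [hscale, norm_mul, norm_pow, ← PadicInt.norm_def, hunit, mul_one, hw]

theorem eq_zero_of_norm_p_mul_sq_eq_norm_sq {a b : ℚ_[p]}
    (h : ‖(p : ℚ_[p]) * a ^ 2‖ = ‖b ^ 2‖) : a = 0 := by
  by_contra ha
  have hp : (p : ℚ_[p]) ≠ 0 := by exact_mod_cast (Fact.out : p.Prime).ne_zero
  have hpa : (p : ℚ_[p]) * a ^ 2 ≠ 0 := mul_ne_zero hp (pow_ne_zero 2 ha)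
  have hb : b ^ 2 ≠ 0 := by
    rw [← norm_ne_zero_iff, ← h, norm_ne_zero_iff]
    exact hpa
  rw [norm_eq_zpow_neg_valuation hpa, norm_eq_zpow_neg_valuation hb,
    zpow_right_inj₀ (by exact_mod_cast (Fact.out : p.Prime).pos)
      (by exact_mod_cast (Fact.out : p.Prime).ne_one)] at h
  simp only [valuation_mul hp (pow_ne_zero 2 ha), valuation_p, valuation_pow] at h
  omega

end Padic

/-- Let `p ≡ 3 (mod 4)` be prime and `D` an integer which is not a square modulo `p`.
Then `p·x₁² + p·x₂² + x₃² = D·x₄²` has no nontrivial solution over `ℚ_p`. -/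
theorem padic_no_nontrivial_solution_of_nonsquare
    (p : ℕ) [Fact p.Prime] (hp4 : p % 4 = 3) (D : ℤ)
    (hD : ¬ IsSquare ((D : ZMod p)))
    (x₁ x₂ x₃ x₄ : ℚ_[p])
    (h : (p : ℚ_[p]) * x₁ ^ 2 + (p : ℚ_[p]) * x₂ ^ 2 + x₃ ^ 2 = (D : ℚ_[p]) * x₄ ^ 2) :
    x₁ = 0 ∧ x₂ = 0 ∧ x₃ = 0 ∧ x₄ = 0 := by
  have hneg_one : ¬IsSquare (PadicInt.toZMod (-1 : ℤ_[p])) := by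
    rw [map_neg, map_one]
    exact fun hsq => ZMod.exists_sq_eq_neg_one_iff.mp hsq hp4
  have hD' : ¬IsSquare (PadicInt.toZMod (D : ℤ_[p])) := by rwa [map_intCast]
  have heq : (p : ℚ_[p]) * (x₁ ^ 2 - ((-1 : ℤ_[p]) : ℚ_[p]) * x₂ ^ 2) =
      -(x₃ ^ 2 - ((D : ℤ_[p]) : ℚ_[p]) * x₄ ^ 2) := by
    push_cast
    linear_combination h
  obtain ⟨a, ha⟩ := exists_norm_eq_max x₁ x₂
  obtain ⟨b, hb⟩ := exists_norm_eq_max x₃ x₄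
  have hnorm : ‖(p : ℚ_[p]) * a ^ 2‖ = ‖b ^ 2‖ := by
    rw [norm_mul, norm_pow, norm_pow, ha, hb, ← Padic.norm_sq_sub_mul_sq hneg_one,
      ← Padic.norm_sq_sub_mul_sq hD', ← norm_mul, heq, norm_neg]
  have ha0 : a = 0 := Padic.eq_zero_of_norm_p_mul_sq_eq_norm_sq hnorm
  have hb0 : b = 0 := by simpa [ha0] using hnorm.symm
  rw [ha0, norm_zero, eq_comm, max_norm_eq_zero_iff] at ha
  rw [hb0, norm_zero, eq_comm, max_norm_eq_zero_iff] at hb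
  exact ⟨ha.1, ha.2, hb.1, hb.2⟩
end

section
/- Consider the set S of triples (γ, ε, ε′) of nonnegative real numbers satisfying 4·γ + 2·ε′ + ε ≥ 2 and ε ≥ ε′. The minimum over S of the quantity max(ε′, γ + ε/2) equals 2/5, and it is attained at (γ, ε, ε′) = (1/5, 2/5, 2/5). -/
/-- Over the set of triples `(γ, ε, ε′)` of nonnegative reals satisfying
`4γ + 2ε′ + ε ≥ 2` and `ε ≥ ε′`, the minimum of `max(ε′, γ + ε/2)` is `2/5`,
attained at `(γ, ε, ε′) = (1/5, 2/5, 2/5)`. -/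
theorem classical_insecure_curve_attack_optimization :
    IsLeast {x : ℝ | ∃ γ ε ε' : ℝ, 0 ≤ γ ∧ 0 ≤ ε ∧ 0 ≤ ε' ∧
        4 * γ + 2 * ε' + ε ≥ 2 ∧ ε ≥ ε' ∧ x = max ε' (γ + ε / 2)} (2 / 5) ∧
      max ((2 : ℝ) / 5) (1 / 5 + (2 / 5) / 2) = 2 / 5 := by
  refine ⟨⟨⟨1/5, 2/5, 2/5, by norm_num⟩, ?_⟩, by norm_num⟩
  rintro x ⟨γ, ε, ε', hγ, hε, hε', hc, hee, rfl⟩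
  have h1 : ε' ≤ max ε' (γ + ε / 2) := le_max_left _ _
  have h2 : γ + ε / 2 ≤ max ε' (γ + ε / 2) := le_max_right _ _
  linarith
end
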